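/- arXiv:1202.2336 — 3 statements merged into one kernel-verified Lean document; each statement's English description precedes it below -/
import Mathlib

section
/- Let 0 < ε and let S_ε be the ε-comb of a finite nonempty set S of positive reals (defined by the greedy procedure: start with S_ε = {max S}, S' = S \ {max S}; repeatedly add s = min{max S', (min S_ε)/(1+ε)} to S_ε and remove all elements ≥ s from S'). Then |S_ε| ≤ |S|, and for every s ∈ S there exists a unique s' ∈ S_ε with s ≤ s' < (1+ε)·s. -/
/-- One pass of the greedy ε-comb procedure: `S'` is the set of remaining
elements, `Sε` the (nonempty) set built so far. -/
noncomputable def combAux (ε : ℝ) (S' Sε : Finset ℝ) (hSε : Sε.Nonempty) : Finset ℝ :=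
  if h : S'.Nonempty then
    combAux ε
      (S'.filter (fun x => x < min (S'.max' h) (Sε.min' hSε / (1 + ε))))
      (insert (min (S'.max' h) (Sε.min' hSε / (1 + ε))) Sε)
      (Finset.insert_nonempty _ _)
  else Sε
termination_by S'.card
decreasing_by
  apply Finset.card_lt_card
  rw [Finset.ssubset_iff_of_subset (Finset.filter_subset _ _)]
  exact ⟨S'.max' h, S'.max'_mem h, by
    simp only [Finset.mem_filter, not_and, not_lt]
    exact fun _ => min_le_left _ _⟩

/-- The ε-comb of a nonempty finite set `S` of reals. -/
noncomputable def comb (ε : ℝ) (S : Finset ℝ) (hS : S.Nonempty) : Finset ℝ :=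
  combAux ε (S.erase (S.max' hS)) {S.max' hS} (Finset.singleton_nonempty _)

/-!
Each greedy step `t = min (max S') (min Sε / (1 + ε))` keeps two invariants: every remaining
element lies below `min Sε`, and any two elements of `Sε` differ by a factor at least `1 + ε`.
A removed element `s ≥ t` is covered by `t` itself if `s = t`; otherwise `t < s ≤ max S'` forces
`t = min Sε / (1 + ε)`, so `s < min Sε < (1 + ε) s`. The separation invariant makes the covering
element unique.
-/

def IsCombSeparated (ε : ℝ) (T : Finset ℝ) : Prop :=
  ∀ a ∈ T, ∀ b ∈ T, a < b → (1 + ε) * a ≤ b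

theorem IsCombSeparated.eq_of_le_of_lt {ε : ℝ} {T : Finset ℝ} (hT : IsCombSeparated ε T)
    (hε : 0 ≤ 1 + ε) {s x y : ℝ} (hx : x ∈ T) (hy : y ∈ T)
    (hsx : s ≤ x) (hxs : x < (1 + ε) * s) (hsy : s ≤ y) (hys : y < (1 + ε) * s) : x = y := by
  have key : ∀ {a b}, a ∈ T → b ∈ T → s ≤ a → b < (1 + ε) * s → ¬ a < b := fun ha hb hsa hbs hab =>
    absurd (hT _ ha _ hb hab) (not_le.2 (hbs.trans_le (mul_le_mul_of_nonneg_left hsa hε)))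
  exact le_antisymm (not_lt.1 (key hy hx hsy hxs)) (not_lt.1 (key hx hy hsx hys))

section CombAux

variable {ε : ℝ}

theorem combAux_of_nonempty {S' Sε : Finset ℝ} {hSε : Sε.Nonempty} (h : S'.Nonempty) {t : ℝ}
    (ht : min (S'.max' h) (Sε.min' hSε / (1 + ε)) = t) :
    combAux ε S' Sε hSε = combAux ε (S'.filter (· < t)) (insert t Sε) (Finset.insert_nonempty t Sε) := by
  subst ht; rw [combAux, dif_pos h]

theorem combAux_empty (Sε : Finset ℝ) (hSε : Sε.Nonempty) : combAux ε ∅ Sε hSε = Sε := by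
  rw [combAux, dif_neg Finset.not_nonempty_empty]

theorem combAux_induction (ε : ℝ) {motive : Finset ℝ → (Sε : Finset ℝ) → Sε.Nonempty → Prop}
    (step : ∀ S' Sε (hSε : Sε.Nonempty) (h : S'.Nonempty) (t : ℝ),
      min (S'.max' h) (Sε.min' hSε / (1 + ε)) = t →
      motive (S'.filter (· < t)) (insert t Sε) (Finset.insert_nonempty t Sε) → motive S' Sε hSε)
    (empty : ∀ Sε hSε, motive ∅ Sε hSε) (S' Sε : Finset ℝ) (hSε : Sε.Nonempty) :
    motive S' Sε hSε := by
  induction S', Sε, hSε using combAux.induct ε with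
  | case1 S' Sε hSε h ih => exact step S' Sε hSε h _ rfl ih
  | case2 S' Sε hSε h => rw [Finset.not_nonempty_iff_eq_empty.1 h]; exact empty Sε hSε

theorem subset_combAux (S' Sε : Finset ℝ) (hSε : Sε.Nonempty) : Sε ⊆ combAux ε S' Sε hSε := by
  induction S', Sε, hSε using combAux_induction ε with
  | step S' Sε hSε h t ht ih => rw [combAux_of_nonempty h ht]; exact (Finset.subset_insert _ _).trans ih
  | empty Sε hSε => rw [combAux_empty]

theorem card_combAux_le (S' Sε : Finset ℝ) (hSε : Sε.Nonempty) :
    (combAux ε S' Sε hSε).card ≤ Sε.card + S'.card := by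
  induction S', Sε, hSε using combAux_induction ε with
  | step S' Sε hSε h t ht ih =>
    rw [combAux_of_nonempty h ht]
    have hfilter : (S'.filter (· < t)).card < S'.card :=
      Finset.card_lt_card <| Finset.filter_ssubset.2
        ⟨S'.max' h, S'.max'_mem h, not_lt.2 (ht ▸ min_le_left _ _)⟩
    have := Finset.card_insert_le t Sε
    omega
  | empty Sε hSε => rw [combAux_empty, Finset.card_empty, add_zero]

theorem lt_min'_insert_of_mem_filter {S' Sε : Finset ℝ} (hSε : Sε.Nonempty)
    (hlt : ∀ x ∈ S', x < Sε.min' hSε) (t : ℝ) :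
    ∀ x ∈ S'.filter (· < t), x < (insert t Sε).min' (Finset.insert_nonempty t Sε) := by
  intro x hx
  rw [Finset.mem_filter] at hx
  rw [Finset.min'_insert _ _ hSε]
  exact lt_min hx.2 (hlt x hx.1)

theorem isCombSeparated_combAux (hε : 0 < 1 + ε) (S' Sε : Finset ℝ) (hSε : Sε.Nonempty)
    (hlt : ∀ x ∈ S', x < Sε.min' hSε) (hsep : IsCombSeparated ε Sε) :
    IsCombSeparated ε (combAux ε S' Sε hSε) := by
  induction S', Sε, hSε using combAux_induction ε with
  | step S' Sε hSε h t ht ih =>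
    rw [combAux_of_nonempty h ht]
    refine ih (lt_min'_insert_of_mem_filter hSε hlt t) ?_
    -- `t` lies below `Sε` because `max S' < min Sε`, and a factor `1 + ε` below it by choice.
    have htb : ∀ b ∈ Sε, (1 + ε) * t ≤ b := fun b hb =>
      ((le_div_iff₀' hε).1 (ht ▸ min_le_right _ _)).trans (Sε.min'_le b hb)
    have hta : ∀ a ∈ Sε, t < a := fun a ha =>
      (ht ▸ min_le_left _ _ : t ≤ S'.max' h).trans_lt
        ((hlt _ (S'.max'_mem h)).trans_le (Sε.min'_le a ha))
    intro a ha b hb hab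
    rcases Finset.mem_insert.1 ha with rfl | haS <;> rcases Finset.mem_insert.1 hb with rfl | hbS
    · exact absurd hab (lt_irrefl _)
    · exact htb b hbS
    · exact absurd hab (hta a haS).asymm
    · exact hsep a haS b hbS hab
  | empty Sε hSε => rwa [combAux_empty]

theorem exists_mem_combAux (hε : 0 < ε) (S' Sε : Finset ℝ) (hSε : Sε.Nonempty)
    (hpos : ∀ x ∈ S', 0 < x) (hlt : ∀ x ∈ S', x < Sε.min' hSε) :
    ∀ s ∈ S', ∃ s' ∈ combAux ε S' Sε hSε, s ≤ s' ∧ s' < (1 + ε) * s := by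
  induction S', Sε, hSε using combAux_induction ε with
  | step S' Sε hSε h t ht ih =>
    rw [combAux_of_nonempty h ht]
    intro s hs
    rcases lt_trichotomy s t with hst | hst | hts
    · exact ih (fun x hx => hpos x (Finset.mem_filter.1 hx).1)
        (lt_min'_insert_of_mem_filter hSε hlt t) s (Finset.mem_filter.2 ⟨hs, hst⟩)
    · exact ⟨t, subset_combAux _ _ _ (Finset.mem_insert_self _ _), hst.le,
        hst ▸ lt_mul_left (hpos s hs) (lt_add_of_pos_right 1 hε)⟩
    · have hmin : Sε.min' hSε < (1 + ε) * s := by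
        have ht' : Sε.min' hSε / (1 + ε) = t := by
          have hlt_max : min (S'.max' h) (Sε.min' hSε / (1 + ε)) < S'.max' h :=
            ht ▸ hts.trans_le (S'.le_max' s hs)
          rw [← ht, min_eq_right ((min_lt_iff.1 hlt_max).resolve_left (lt_irrefl _)).le]
        rwa [← ht', div_lt_iff₀' (by linarith)] at hts
      exact ⟨Sε.min' hSε, subset_combAux _ _ _ (Finset.mem_insert_of_mem (Sε.min'_mem hSε)),
        (hlt s hs).le, hmin⟩
  | empty Sε hSε => simp

end CombAux

theorem stmt_4 (ε : ℝ) (hε : 0 < ε) (S : Finset ℝ) (hS : S.Nonempty)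
    (hpos : ∀ s ∈ S, (0:ℝ) < s) :
    (comb ε S hS).card ≤ S.card ∧
    ∀ s ∈ S, ∃! s', s' ∈ comb ε S hS ∧ s ≤ s' ∧ s' < (1 + ε) * s := by
  set M := S.max' hS
  have hM : M ∈ S := S.max'_mem hS
  have hlt : ∀ x ∈ S.erase M, x < ({M} : Finset ℝ).min' (Finset.singleton_nonempty M) :=
    fun x hx => by
      rw [Finset.min'_singleton]
      exact (S.le_max' x (Finset.mem_of_mem_erase hx)).lt_of_ne (Finset.ne_of_mem_erase hx)
  have hsep : IsCombSeparated ε (comb ε S hS) :=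
    isCombSeparated_combAux (by linarith) _ _ _ hlt fun a ha b hb hab => by
      rw [Finset.mem_singleton] at ha hb; exact absurd (ha.trans hb.symm) hab.ne
  refine ⟨?_, fun s hs => ?_⟩
  · have := card_combAux_le (ε := ε) (S.erase M) {M} (Finset.singleton_nonempty M)
    rw [Finset.card_singleton, add_comm, Finset.card_erase_add_one hM] at this
    exact this
  · have hexists : ∃ s' ∈ comb ε S hS, s ≤ s' ∧ s' < (1 + ε) * s := by
      by_cases hsM : s = M
      · exact ⟨s, subset_combAux _ _ _ (Finset.mem_singleton.2 hsM), le_rfl,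
          lt_mul_left (hpos s hs) (lt_add_of_pos_right 1 hε)⟩
      · exact exists_mem_combAux hε _ _ _ (fun x hx => hpos x (Finset.mem_of_mem_erase hx)) hlt s
          (Finset.mem_erase.2 ⟨hsM, hs⟩)
    obtain ⟨s', hs', hss', hs's⟩ := hexists
    exact ⟨s', ⟨hs', hss', hs's⟩, fun y ⟨hy, hsy, hys⟩ =>
      hsep.eq_of_le_of_lt (by linarith) hy hs' hsy hys hss' hs's⟩
end

section
/- In the bunch setup, for any vertices u, v and any index j with 0 ≤ j < k−1: if p_j(u) ∉ B_v, then d(v, p_{j+1}(v)) ≤ d(u, p_j(u)) + d(u, v). -/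
/-!
Let `w = p j u` and let `i ≥ j` be the last level with `w ∈ A i`. Since `w ∉ B v`, the bunch
condition fails at level `i`, i.e. `d(v, p_{i+1}(v)) ≤ d(v, w)`; and `p_{i+1}(v) ∈ A_{i+1} ⊆ A_{j+1}`
gives `d(v, p_{j+1}(v)) ≤ d(v, p_{i+1}(v))`. The triangle inequality through `u` finishes.
-/

theorem Nat.exists_le_lt_and_not_succ {P : ℕ → Prop} {j k : ℕ} (hjk : j ≤ k)
    (hj : P j) (hk : ¬ P k) : ∃ i, j ≤ i ∧ i < k ∧ P i ∧ ¬ P (i + 1) := by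
  induction k, hjk using Nat.le_induction with
  | base => exact absurd hj hk
  | succ k hjk ih =>
    by_cases hPk : P k
    · exact ⟨k, hjk, k.lt_succ_self, hPk, hk⟩
    · obtain ⟨i, hji, hik, hPi, hPi'⟩ := ih hPk
      exact ⟨i, hji, hik.trans k.lt_succ_self, hPi, hPi'⟩

theorem dist_nearest_le_of_le {V : Type*} [PseudoMetricSpace V] {A : ℕ → Set V}
    (hA : Antitone A) {p : ℕ → V → V} {n : ℕ} (hpmem : ∀ i ≤ n, ∀ u, p i u ∈ A i)
    (hpnear : ∀ i ≤ n, ∀ u, ∀ w ∈ A i, dist u (p i u) ≤ dist u w)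
    (v : V) {i j : ℕ} (hij : i ≤ j) (hjn : j ≤ n) : dist v (p i v) ≤ dist v (p j v) :=
  hpnear i (hij.trans hjn) v _ (hA hij (hpmem j hjn v))

theorem stmt_9_general {V : Type*} [MetricSpace V] (k : ℕ)
    (A : ℕ → Set V) (hAmono : ∀ i, A (i + 1) ⊆ A i)
    (hAk : A k = ∅)
    (p : ℕ → V → V)
    (hpmem : ∀ i ≤ k - 1, ∀ u, p i u ∈ A i)
    (hpnear : ∀ i ≤ k - 1, ∀ u, ∀ w ∈ A i, dist u (p i u) ≤ dist u w)
    (B : V → Set V)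
    (hB : ∀ u w, w ∈ B u ↔ ∃ i < k, w ∈ A i ∧ w ∉ A (i + 1) ∧
      (i + 1 < k → dist u w < dist u (p (i + 1) u)))
    (u v : V) (j : ℕ) (hj : j < k - 1)
    (hnot : p j u ∉ B v) :
    dist v (p (j + 1) v) ≤ dist u (p j u) + dist u v := by
  obtain ⟨i, hji, hik, hwi, hwi'⟩ := Nat.exists_le_lt_and_not_succ (P := (p j u ∈ A ·))
    (by omega : j ≤ k) (hpmem j hj.le u) (by simp [hAk])
  have hbunch : i + 1 < k ∧ dist v (p (i + 1) v) ≤ dist v (p j u) := by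
    have hnB := (hB v (p j u)).not.mp hnot
    push Not at hnB
    exact hnB i hik hwi hwi'
  calc dist v (p (j + 1) v)
      ≤ dist v (p (i + 1) v) :=
        dist_nearest_le_of_le (antitone_nat_of_succ_le hAmono) hpmem hpnear v (by omega)
          (by omega)
    _ ≤ dist v (p j u) := hbunch.2
    _ ≤ dist v u + dist u (p j u) := dist_triangle v u _
    _ = dist u (p j u) + dist u v := by rw [dist_comm v u, add_comm]

theorem stmt_9 {V : Type*} [MetricSpace V] [Fintype V] (k : ℕ) (hk : 1 ≤ k)
    (A : ℕ → Set V) (hA0 : A 0 = Set.univ) (hAmono : ∀ i, A (i + 1) ⊆ A i)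
    (hAk : A k = ∅) (hAne : (A (k - 1)).Nonempty)
    (p : ℕ → V → V)
    (hpmem : ∀ i ≤ k - 1, ∀ u, p i u ∈ A i)
    (hpnear : ∀ i ≤ k - 1, ∀ u, ∀ w ∈ A i, dist u (p i u) ≤ dist u w)
    (B : V → Set V)
    (hB : ∀ u w, w ∈ B u ↔ ∃ i < k, w ∈ A i ∧ w ∉ A (i + 1) ∧
      (i + 1 < k → dist u w < dist u (p (i + 1) u)))
    (u v : V) (j : ℕ) (hj : j < k - 1)
    (hnot : p j u ∉ B v) :
    dist v (p (j + 1) v) ≤ dist u (p j u) + dist u v :=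
  stmt_9_general k A hAmono hAk p hpmem hpnear B hB u v j hj hnot
end

section
/- In the bunch setup, for any vertices u, v and any even index j with 0 ≤ j ≤ k−3: if p_j(u) ∉ B_v and p_{j+1}(v) ∉ B_u, then d(u, p_{j+2}(u)) ≤ 2·d(u, v) + d(u, p_j(u)). -/
/-! A point `w ∈ A i` outside the bunch of `x` is at least as far from `x` as the pivot
`p (i + 1) x`. Applying this to `p j u ∉ B v` and to `p (j + 1) v ∉ B u`, and joining the two
estimates by the triangle inequality through `v`, gives the bound. -/

lemma exists_mem_notMem_succ {V : Type*} {A : ℕ → Set V} {w : V} {j k : ℕ} (hjk : j ≤ k)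
    (hj : w ∈ A j) (hk : w ∉ A k) : ∃ i, j ≤ i ∧ i < k ∧ w ∈ A i ∧ w ∉ A (i + 1) := by
  induction k, hjk using Nat.le_induction with
  | base => exact absurd hj hk
  | succ k hjk ih =>
    by_cases hwk : w ∈ A k
    · exact ⟨k, hjk, k.lt_succ_self, hwk, hk⟩
    · obtain ⟨i, hji, hik, hwi, hwi'⟩ := ih hwk
      exact ⟨i, hji, hik.trans k.lt_succ_self, hwi, hwi'⟩

section Bunch

variable {V : Type*} [PseudoMetricSpace V] {k : ℕ} {A : ℕ → Set V} {p : ℕ → V → V}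
  {B : V → Set V}

/-- The point `w` leaves the hierarchy at some level `i ≥ j`; being outside the bunch means
`p (i + 1) x` is no farther than `w`, and `p (j + 1) x` is nearer still since
`A (i + 1) ⊆ A (j + 1)`. -/
lemma dist_pivot_succ_le_of_notMem_bunch (hAmono : ∀ i, A (i + 1) ⊆ A i) (hAk : A k = ∅)
    (hpmem : ∀ i ≤ k - 1, ∀ u, p i u ∈ A i)
    (hpnear : ∀ i ≤ k - 1, ∀ u, ∀ w ∈ A i, dist u (p i u) ≤ dist u w)
    (hB : ∀ u w, w ∈ B u ↔ ∃ i < k, w ∈ A i ∧ w ∉ A (i + 1) ∧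
      (i + 1 < k → dist u w < dist u (p (i + 1) u)))
    {x w : V} {j : ℕ} (hj : j + 2 ≤ k) (hw : w ∈ A j) (hwB : w ∉ B x) :
    dist x (p (j + 1) x) ≤ dist x w := by
  obtain ⟨i, hji, hik, hwi, hwi'⟩ :=
    exists_mem_notMem_succ (by omega) hw (by simp [hAk] : w ∉ A k)
  have hfar : i + 1 < k ∧ dist x (p (i + 1) x) ≤ dist x w := by
    by_contra! h
    exact hwB ((hB x w).2 ⟨i, hik, hwi, hwi', h⟩)
  have hsub : A (i + 1) ⊆ A (j + 1) :=
    antitone_nat_of_succ_le hAmono (by omega : j + 1 ≤ i + 1)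
  calc dist x (p (j + 1) x)
      ≤ dist x (p (i + 1) x) := hpnear _ (by omega) x _ (hsub (hpmem _ (by omega) x))
    _ ≤ dist x w := hfar.2

end Bunch

theorem stmt_10_general {V : Type*} [MetricSpace V] (k : ℕ)
    (A : ℕ → Set V) (hAmono : ∀ i, A (i + 1) ⊆ A i)
    (hAk : A k = ∅)
    (p : ℕ → V → V)
    (hpmem : ∀ i ≤ k - 1, ∀ u, p i u ∈ A i)
    (hpnear : ∀ i ≤ k - 1, ∀ u, ∀ w ∈ A i, dist u (p i u) ≤ dist u w)
    (B : V → Set V)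
    (hB : ∀ u w, w ∈ B u ↔ ∃ i < k, w ∈ A i ∧ w ∉ A (i + 1) ∧
      (i + 1 < k → dist u w < dist u (p (i + 1) u)))
    (u v : V) (j : ℕ) (hj : j + 3 ≤ k)
    (h1 : p j u ∉ B v) (h2 : p (j + 1) v ∉ B u) :
    dist u (p (j + 2) u) ≤ 2 * dist u v + dist u (p j u) := by
  have hv : dist v (p (j + 1) v) ≤ dist v (p j u) :=
    dist_pivot_succ_le_of_notMem_bunch hAmono hAk hpmem hpnear hB (by omega)
      (hpmem j (by omega) u) h1
  have hu : dist u (p (j + 2) u) ≤ dist u (p (j + 1) v) :=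
    dist_pivot_succ_le_of_notMem_bunch hAmono hAk hpmem hpnear hB (by omega)
      (hpmem (j + 1) (by omega) v) h2
  calc dist u (p (j + 2) u)
      ≤ dist u (p (j + 1) v) := hu
    _ ≤ dist u v + dist v (p (j + 1) v) := dist_triangle _ _ _
    _ ≤ dist u v + dist v (p j u) := by gcongr
    _ ≤ dist u v + (dist v u + dist u (p j u)) := by gcongr; exact dist_triangle _ _ _
    _ = 2 * dist u v + dist u (p j u) := by rw [dist_comm v u]; ring

theorem stmt_10 {V : Type*} [MetricSpace V] [Fintype V] (k : ℕ) (hk : 1 ≤ k)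
    (A : ℕ → Set V) (hA0 : A 0 = Set.univ) (hAmono : ∀ i, A (i + 1) ⊆ A i)
    (hAk : A k = ∅) (hAne : (A (k - 1)).Nonempty)
    (p : ℕ → V → V)
    (hpmem : ∀ i ≤ k - 1, ∀ u, p i u ∈ A i)
    (hpnear : ∀ i ≤ k - 1, ∀ u, ∀ w ∈ A i, dist u (p i u) ≤ dist u w)
    (B : V → Set V)
    (hB : ∀ u w, w ∈ B u ↔ ∃ i < k, w ∈ A i ∧ w ∉ A (i + 1) ∧
      (i + 1 < k → dist u w < dist u (p (i + 1) u)))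
    (u v : V) (j : ℕ) (hje : Even j) (hj : j + 3 ≤ k)
    (h1 : p j u ∉ B v) (h2 : p (j + 1) v ∉ B u) :
    dist u (p (j + 2) u) ≤ 2 * dist u v + dist u (p j u) :=
  stmt_10_general k A hAmono hAk p hpmem hpnear B hB u v j hj h1 h2
end
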